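/- arXiv:quant-ph/0609237 — 2 statements merged into one kernel-verified Lean document; each statement's English description precedes it below -/
import Mathlib

section
/- Let ρ_AB = Σ_x p_x |x⟩⟨x| ⊗ ρ_x be a classical-quantum state with marginal ρ = Σ_x p_x ρ_x invertible, and define H₂(ρ_AB|ρ) = -log₂ Tr(((I ⊗ ρ^{-1/2}) ρ_AB)²). Then Tr(((I ⊗ ρ^{-1/2}) ρ_AB)²) = Σ_x p_x² Tr(ρ^{-1/2} ρ_x ρ^{-1/2} ρ_x). Consequently, the maximal average probability of correctly guessing x from ρ_x (supremum over all POVMs) is at least 2^{-H₂(ρ_AB|ρ)}. -/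
/-!
The operator `(1 ⊗ R) ρ_AB` is block diagonal with blocks `p_x R ρ_x`, so the trace of its square
is `∑ p_x² Tr(R ρ_x R ρ_x)`. From `R (R ρ) = R² ρ = 1` we get `(R ρ) R = 1`, so the
pretty good measurement `M_x = p_x R ρ_x R` is a POVM, and its guessing probability is exactly
that trace. The trace is strictly positive: writing `R = DᴴD` with `D` invertible and
`ρ_x = EᴴE`, each `Tr(R ρ_x R ρ_x)` is the squared Hilbert–Schmidt norm of `(E Dᴴ)ᴴ (E Dᴴ)`.
Hence `2^{-H₂} = 2^{log₂ Tr}` is that trace.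
-/

open Matrix BigOperators ComplexOrder Kronecker

namespace Matrix

section BlockDiagonalKronecker

variable {X d R : Type*} [Fintype X] [DecidableEq X] [Fintype d] [CommSemiring R]

lemma one_kronecker_mul_sum_single_kronecker (B : Matrix d d R) (A : X → Matrix d d R) :
    ((1 : Matrix X X R) ⊗ₖ B) * ∑ x, single x x 1 ⊗ₖ A x =
      ∑ x, single x x 1 ⊗ₖ (B * A x) := by
  simp only [Finset.mul_sum, ← mul_kronecker_mul, one_mul]

lemma trace_sum_single_kronecker_mul_sum_single_kronecker (A B : X → Matrix d d R) :
    ((∑ x, single x x 1 ⊗ₖ A x) * ∑ y, single y y 1 ⊗ₖ B y).trace =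
      ∑ x, (A x * B x).trace := by
  rw [Finset.sum_mul_sum, trace_sum]
  refine Finset.sum_congr rfl fun x _ => ?_
  rw [trace_sum, Finset.sum_eq_single_of_mem x (Finset.mem_univ x)]
  · rw [← mul_kronecker_mul, single_mul_single_same, one_mul, trace_kronecker,
      trace_single_eq_same, one_mul]
  · intro y _ hyx
    rw [← mul_kronecker_mul, single_mul_single_of_ne (h := hyx.symm), zero_kronecker, trace_zero]

end BlockDiagonalKronecker

lemma mul_mul_eq_one_of_mul_self_eq_inv {d R : Type*} [Fintype d] [DecidableEq d] [CommRing R]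
    {A B : Matrix d d R} (hA : IsUnit A.det) (hB : B * B = A⁻¹) : B * A * B = 1 :=
  mul_eq_one_comm.mp <| by rw [← Matrix.mul_assoc, hB, nonsing_inv_mul A hA]

section RCLike

variable {n 𝕜 : Type*} [Fintype n] [RCLike 𝕜]

lemma trace_conjTranspose_mul_self_mul_conjTranspose_mul_self_sq (D E : Matrix n n 𝕜) :
    (Dᴴ * D * (Eᴴ * E) * (Dᴴ * D) * (Eᴴ * E)).trace =
      (((E * Dᴴ)ᴴ * (E * Dᴴ))ᴴ * ((E * Dᴴ)ᴴ * (E * Dᴴ))).trace := by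
  simp only [conjTranspose_mul, conjTranspose_conjTranspose, Matrix.mul_assoc]
  rw [trace_mul_comm]
  simp only [Matrix.mul_assoc]

open scoped MatrixOrder in
lemma PosDef.trace_mul_mul_mul_pos [DecidableEq n] {A B : Matrix n n 𝕜} (hA : A.PosDef)
    (hB : B.PosSemidef) (hB0 : B ≠ 0) : 0 < (A * B * A * B).trace := by
  obtain ⟨D, hD, rfl⟩ := CStarAlgebra.isStrictlyPositive_iff_eq_star_mul_self.mp
    hA.isStrictlyPositive
  obtain ⟨E, rfl⟩ := CStarAlgebra.nonneg_iff_eq_star_mul_self.mp hB.nonneg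
  simp only [star_eq_conjTranspose] at hB0 ⊢
  rw [trace_conjTranspose_mul_self_mul_conjTranspose_mul_self_sq]
  have hE : E ≠ 0 := by rintro rfl; simp at hB0
  have hED : E * Dᴴ ≠ 0 := by
    rwa [Ne, ← star_eq_conjTranspose, hD.star.mul_left_eq_zero]
  refine (posSemidef_conjTranspose_mul_self _).trace_nonneg.lt_of_ne' ?_
  rwa [Ne, trace_conjTranspose_mul_self_eq_zero_iff, conjTranspose_mul_self_eq_zero]

lemma PosDef.sum_sq_mul_trace_mul_mul_mul_pos {X : Type*} [Fintype X] [DecidableEq n]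
    {p : X → ℝ} (hp : ∀ x, 0 ≤ p x) (hpsum : ∑ x, p x = 1) {R : Matrix n n 𝕜} (hR : R.PosDef)
    {ρ : X → Matrix n n 𝕜} (hρ : ∀ x, (ρ x).PosSemidef) (hρ0 : ∀ x, ρ x ≠ 0) :
    0 < ∑ x, (p x : 𝕜) ^ 2 * (R * ρ x * R * ρ x).trace := by
  obtain ⟨x₀, -, hx₀⟩ :=
    Finset.exists_lt_of_sum_lt (s := .univ) (f := fun _ => 0) (g := p) (by simp [hpsum])
  have htr x : 0 < (R * ρ x * R * ρ x).trace := hR.trace_mul_mul_mul_pos (hρ x) (hρ0 x)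
  refine Finset.sum_pos' (fun x _ => ?_) ⟨x₀, Finset.mem_univ _, ?_⟩
  · exact mul_nonneg (pow_nonneg (RCLike.ofReal_nonneg.mpr (hp x)) 2) (htr x).le
  · exact mul_pos (pow_pos (RCLike.ofReal_pos.mpr hx₀) 2) (htr x₀)

end RCLike

end Matrix

/-- For the cq-state `ρ_AB = ∑_x p_x |x⟩⟨x| ⊗ ρ_x` with invertible marginal `ρ`,
`Tr(((I ⊗ ρ^{-1/2}) ρ_AB)²) = ∑_x p_x² Tr(ρ^{-1/2} ρ_x ρ^{-1/2} ρ_x)`, and the maximal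
average guessing probability over POVMs is at least `2^{-H₂(ρ_AB|ρ)}`. -/
theorem h2_guessing_lemma {X d : Type*} [Fintype X] [DecidableEq X] [Fintype d] [DecidableEq d]
    (p : X → ℝ) (hp : ∀ x, 0 ≤ p x) (hpsum : ∑ x, p x = 1)
    (ρ : X → Matrix d d ℂ) (hρ : ∀ x, (ρ x).PosSemidef) (hρtr : ∀ x, (ρ x).trace = 1)
    (ρbar : Matrix d d ℂ) (hρbar : ρbar = ∑ x, (p x : ℂ) • ρ x)
    (hpd : ρbar.PosDef)
    (R : Matrix d d ℂ) (hR : R.PosSemidef) (hRR : R * R = ρbar⁻¹)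
    (ρAB : Matrix (X × d) (X × d) ℂ)
    (hρAB : ρAB = ∑ x, (p x : ℂ) • ((Matrix.single x x 1) ⊗ₖ ρ x)) :
    (((((1 : Matrix X X ℂ) ⊗ₖ R) * ρAB) * (((1 : Matrix X X ℂ) ⊗ₖ R) * ρAB)).trace
        = ∑ x, (p x : ℂ) ^ 2 * (R * ρ x * R * ρ x).trace) ∧
    ∃ M : X → Matrix d d ℂ, (∀ x, (M x).PosSemidef) ∧ (∑ x, M x = (1 : Matrix d d ℂ)) ∧
      (2 : ℝ) ^ (-(-Real.logb 2
          ((((((1 : Matrix X X ℂ) ⊗ₖ R) * ρAB) * (((1 : Matrix X X ℂ) ⊗ₖ R) * ρAB)).trace).re)))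
        ≤ ∑ x, p x * ((M x * ρ x).trace).re := by
  have hRρR : R * ρbar * R = 1 :=
    mul_mul_eq_one_of_mul_self_eq_inv (ρbar.isUnit_iff_isUnit_det.mp hpd.isUnit) hRR
  have hRpos : R.PosDef := hR.posDef_iff_det_ne_zero.mpr <|
    (isUnit_det_of_right_inverse (B := ρbar * R) (by rw [← Matrix.mul_assoc, hRρR])).ne_zero
  have htrace : (((1 : Matrix X X ℂ) ⊗ₖ R) * ρAB * (((1 : Matrix X X ℂ) ⊗ₖ R) * ρAB)).trace
      = ∑ x, (p x : ℂ) ^ 2 * (R * ρ x * R * ρ x).trace := by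
    simp only [hρAB, ← kronecker_smul, one_kronecker_mul_sum_single_kronecker,
      trace_sum_single_kronecker_mul_sum_single_kronecker, Matrix.mul_smul, Matrix.smul_mul,
      trace_smul, Matrix.mul_assoc, smul_eq_mul]
    ring_nf
  refine ⟨htrace, fun x => (p x : ℂ) • (R * ρ x * R), fun x => ?_, ?_, ?_⟩
  · simpa [hR.isHermitian.eq] using
      ((hρ x).mul_mul_conjTranspose_same R).smul (by exact_mod_cast hp x : (0 : ℂ) ≤ p x)
  · simp [← hRρR, hρbar, Finset.mul_sum, Finset.sum_mul]
  · have hρ0 : ∀ x, ρ x ≠ 0 := fun x h => by simpa [h] using hρtr x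
    have hpos : 0 < (∑ x, (p x : ℂ) ^ 2 * (R * ρ x * R * ρ x).trace).re :=
      (Complex.pos_iff.mp (hRpos.sum_sq_mul_trace_mul_mul_mul_pos hp hpsum hρ hρ0)).1
    rw [htrace, neg_neg, Real.rpow_logb two_pos (by norm_num) hpos, Complex.re_sum]
    refine (Finset.sum_congr rfl fun x _ => ?_).le
    rw [Matrix.smul_mul, trace_smul, smul_eq_mul, ← Complex.ofReal_pow, Complex.re_ofReal_mul,
      Complex.re_ofReal_mul]
    ring
end

section
/- Let a, b, n be real numbers and suppose that for all γ > 4, 2^a ≥ 2^{n−b−γ}(1 − 2^{−γ/4+1}). Then a + b + c ≥ n with c = 5log₂5 − 4. Moreover, the function δ(γ) = γ − log₂(1 − 2^{−γ/4+1}) on (4, ∞) attains its minimum value 5log₂5 − 4 at γ = 4(log₂5 − 1). -/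
/-!
Substituting `t = 2^(-γ/4)` turns `δ(γ)` into `-log₂ (t⁴ (1 - 2t))`, and
`16 - 3125 t⁴ (1 - 2t) = (5t - 2)² (250t³ + 75t² + 20t + 4)`, so `t⁴ (1 - 2t)` is at most
`16/3125 = 2⁴/5⁵`, with equality at `t = 2/5`, i.e. at `γ = 4(log₂5 - 1)`.
Taking `log₂` of the hypothesis at any `γ > 4` gives `n ≤ a + b + δ(γ)`.
-/

open Real

namespace Tradeoff

noncomputable def delta (γ : ℝ) : ℝ := γ - logb 2 (1 - (2 : ℝ) ^ (-γ / 4 + 1))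

lemma pow_four_mul_one_sub_two_mul_le {t : ℝ} (ht : 0 ≤ t) :
    t ^ 4 * (1 - 2 * t) ≤ 16 / 3125 := by
  nlinarith [mul_nonneg (sq_nonneg (5 * t - 2))
    (by positivity : (0 : ℝ) ≤ 250 * t ^ 3 + 75 * t ^ 2 + 20 * t + 4)]

lemma neg_logb_two_sixteen_div : -logb 2 (16 / 3125) = 5 * logb 2 5 - 4 := by
  have h16 : logb 2 16 = 4 := by
    rw [show (16 : ℝ) = 2 ^ (4 : ℝ) by norm_num, logb_rpow (by norm_num) (by norm_num)]
  have h3125 : logb 2 3125 = 5 * logb 2 5 := by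
    rw [show (3125 : ℝ) = 5 ^ (5 : ℕ) by norm_num, logb_pow]; norm_num
  rw [logb_div (by norm_num) (by norm_num), h16, h3125]
  ring

lemma two_lt_logb_two_five : 2 < logb 2 5 := by
  rw [lt_logb_iff_rpow_lt (by norm_num) (by norm_num)]
  norm_num

lemma two_rpow_neg_div_four_add_one (γ : ℝ) :
    (2 : ℝ) ^ (-γ / 4 + 1) = 2 * 2 ^ (-γ / 4) := by
  rw [rpow_add two_pos, rpow_one, mul_comm]

lemma one_sub_two_rpow_pos {γ : ℝ} (hγ : 4 < γ) : 0 < 1 - (2 : ℝ) ^ (-γ / 4 + 1) := by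
  have : (2 : ℝ) ^ (-γ / 4 + 1) < 2 ^ (0 : ℝ) :=
    rpow_lt_rpow_of_exponent_lt (by norm_num) (by linarith)
  rw [rpow_zero] at this
  linarith

lemma delta_eq_neg_logb {γ : ℝ} (hγ : 4 < γ) :
    delta γ = -logb 2 (((2 : ℝ) ^ (-γ / 4)) ^ 4 * (1 - 2 * 2 ^ (-γ / 4))) := by
  have hpos := one_sub_two_rpow_pos hγ
  rw [two_rpow_neg_div_four_add_one] at hpos
  have hlog_t : logb 2 ((2 : ℝ) ^ (-γ / 4)) = -γ / 4 :=
    logb_rpow (by norm_num) (by norm_num)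
  rw [delta, two_rpow_neg_div_four_add_one,
    logb_mul (by positivity) hpos.ne', logb_pow, hlog_t]
  push_cast
  ring

theorem logb_two_five_mul_sub_le_delta {γ : ℝ} (hγ : 4 < γ) :
    5 * logb 2 5 - 4 ≤ delta γ := by
  have hpos := one_sub_two_rpow_pos hγ
  rw [two_rpow_neg_div_four_add_one] at hpos
  rw [delta_eq_neg_logb hγ, ← neg_logb_two_sixteen_div, neg_le_neg_iff]
  exact logb_le_logb_of_le (by norm_num) (by positivity)
    (pow_four_mul_one_sub_two_mul_le (by positivity))

lemma four_lt_argmin : 4 < 4 * (logb 2 5 - 1) := by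
  linarith [two_lt_logb_two_five]

theorem delta_argmin : delta (4 * (logb 2 5 - 1)) = 5 * logb 2 5 - 4 := by
  have ht : (2 : ℝ) ^ (-(4 * (logb 2 5 - 1)) / 4) = 2 / 5 := by
    rw [show -(4 * (logb 2 5 - 1)) / 4 = 1 - logb 2 5 by ring, rpow_sub two_pos,
      rpow_one, rpow_logb (by norm_num) (by norm_num) (by norm_num)]
  rw [delta_eq_neg_logb four_lt_argmin, ht, ← neg_logb_two_sixteen_div]
  norm_num

lemma le_add_add_delta_of_rpow_mul_le {a b n γ x : ℝ} (hx : 0 < x)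
    (h : (2 : ℝ) ^ (n - b - γ) * x ≤ 2 ^ a) : n ≤ a + b + (γ - logb 2 x) := by
  have hlog := logb_le_logb_of_le (b := 2) (by norm_num) (by positivity) h
  rw [logb_mul (by positivity) hx.ne', logb_rpow (by norm_num) (by norm_num),
    logb_rpow (by norm_num) (by norm_num)] at hlog
  linarith

end Tradeoff

open Tradeoff in
/-- If `2^a ≥ 2^{n−b−γ}(1 − 2^{−γ/4+1})` for all `γ > 4`, then `a + b + c ≥ n` with
`c = 5log₂5 − 4`. Moreover `δ(γ) = γ − log₂(1 − 2^{−γ/4+1})` attains its minimum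
`5log₂5 − 4` on `(4, ∞)` at `γ = 4(log₂5 − 1)`. -/
theorem tradeoff_constant (a b n : ℝ)
    (h : ∀ γ : ℝ, 4 < γ →
      (2 : ℝ) ^ (n - b - γ) * (1 - (2 : ℝ) ^ (-γ / 4 + 1)) ≤ (2 : ℝ) ^ a) :
    n ≤ a + b + (5 * Real.logb 2 5 - 4) ∧
    (∀ γ : ℝ, 4 < γ →
      5 * Real.logb 2 5 - 4 ≤ γ - Real.logb 2 (1 - (2 : ℝ) ^ (-γ / 4 + 1))) ∧
    (4 * (Real.logb 2 5 - 1)) -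
        Real.logb 2 (1 - (2 : ℝ) ^ (-(4 * (Real.logb 2 5 - 1)) / 4 + 1))
      = 5 * Real.logb 2 5 - 4 := by
  refine ⟨?_, fun γ hγ => logb_two_five_mul_sub_le_delta hγ, delta_argmin⟩
  have hn := le_add_add_delta_of_rpow_mul_le (one_sub_two_rpow_pos four_lt_argmin)
    (h _ four_lt_argmin)
  rwa [← delta, delta_argmin] at hn
end
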